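/- Let Λ⊕Γ = {(W_j ⊕ V_j, Λ_j ⊕ Γ_j, v_j)}_{j∈J} be a g-fusion frame for H ⊕ X with bounds A₁, B₁ and frame operator S = S_{Λ⊕Γ}. Then Δ = {(S^{-1}(W_j⊕V_j), (Λ_j⊕Γ_j) P_{W_j⊕V_j} S^{-1}, v_j)}_{j∈J} is a g-fusion frame for H ⊕ X with lower bound B₁^{-1}, and the frame operator of Δ equals S^{-1}. -/

import Mathlib

/-!
Write `P_N` for the orthogonal projection onto the closure of `N`. The frame operator `S` is
positive, so `S⁻¹` is self-adjoint, and then `P_N S⁻¹ P_{S⁻¹N} = P_N S⁻¹` and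
`P_{S⁻¹N} S⁻¹ P_N = S⁻¹ P_N`. Hence the analysis operators of `Δ` are those of `Λ ⊕ Γ` composed
with `S⁻¹`: the frame operator of `Δ` is `S⁻¹ S S⁻¹ = S⁻¹` and its frame sums equal `⟪S⁻¹u, u⟫`.
The lower bound is the antitonicity of the inverse in the Loewner order: `S ≤ B₁` gives
`B₁⁻¹ ≤ S⁻¹`.
-/

open ContinuousLinearMap

noncomputable def proj {E : Type*} [NormedAddCommGroup E] [InnerProductSpace ℂ E]
    (W : Submodule ℂ E) [CompleteSpace W] : E →L[ℂ] E :=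
  W.subtypeL.comp W.orthogonalProjection

noncomputable def projOp {E : Type*} [NormedAddCommGroup E] [InnerProductSpace ℂ E]
    [CompleteSpace E] (W : Submodule ℂ E) : E →L[ℂ] E :=
  haveI : CompleteSpace W.topologicalClosure := W.isClosed_topologicalClosure.completeSpace_coe
  W.topologicalClosure.subtypeL.comp W.topologicalClosure.orthogonalProjection

/-- The operator U ⊕ V acting between ℓ²-direct sums of two Hilbert spaces. -/
noncomputable def oplus {E F E' F' : Type*} [NormedAddCommGroup E] [NormedSpace ℂ E]
    [NormedAddCommGroup F] [NormedSpace ℂ F] [NormedAddCommGroup E'] [NormedSpace ℂ E']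
    [NormedAddCommGroup F'] [NormedSpace ℂ F']
    (A : E →L[ℂ] E') (B : F →L[ℂ] F') : WithLp 2 (E × F) →L[ℂ] WithLp 2 (E' × F') :=
  ((WithLp.prodContinuousLinearEquiv 2 ℂ E' F').symm.toContinuousLinearMap).comp
    ((A.prodMap B).comp (WithLp.prodContinuousLinearEquiv 2 ℂ E F).toContinuousLinearMap)

/-- The subspace W ⊕ V of the ℓ²-direct sum. -/
noncomputable def prodSub {E F : Type*} [NormedAddCommGroup E] [NormedSpace ℂ E]
    [NormedAddCommGroup F] [NormedSpace ℂ F] (W : Submodule ℂ E) (V : Submodule ℂ F) :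
    Submodule ℂ (WithLp 2 (E × F)) :=
  (W.prod V).map (WithLp.prodContinuousLinearEquiv 2 ℂ E F).symm.toContinuousLinearMap.toLinearMap

open RCLike

section projOp

variable {E F : Type*} [NormedAddCommGroup E] [InnerProductSpace ℂ E] [CompleteSpace E]
  [NormedAddCommGroup F] [InnerProductSpace ℂ F] [CompleteSpace F] (K : Submodule ℂ E)

theorem projOp_apply_of_mem_topologicalClosure {x : E} (hx : x ∈ K.topologicalClosure) :
    projOp K x = x :=
  Submodule.starProjection_eq_self_iff.2 hx

theorem projOp_apply_of_mem_orthogonal {x : E} (hx : x ∈ Kᗮ) : projOp K x = 0 := by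
  rw [← K.orthogonal_closure] at hx
  exact (Submodule.starProjection_apply_eq_zero_iff _).2 hx

theorem sub_projOp_apply_mem_orthogonal (x : E) : x - projOp K x ∈ Kᗮ :=
  K.orthogonal_closure ▸ K.topologicalClosure.sub_starProjection_mem_orthogonal x

theorem projOp_apply_eq_of_mem_of_sub_mem_orthogonal {x p : E} (hp : p ∈ K) (hxp : x - p ∈ Kᗮ) :
    projOp K x = p :=
  Submodule.eq_starProjection_of_mem_of_inner_eq_zero (K.le_topologicalClosure hp)
    fun _ hw => inner_eq_zero_symm.1 <| (K.orthogonal_closure ▸ hxp) _ hw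

theorem adjoint_projOp : adjoint (projOp K) = projOp K :=
  isSelfAdjoint_starProjection K.topologicalClosure

theorem projOp_map_apply_projOp (T : E →L[ℂ] F) (x : E) :
    projOp (K.map (T : E →ₗ[ℂ] F)) (T (projOp K x)) = T (projOp K x) := by
  refine projOp_apply_of_mem_topologicalClosure _ ?_
  rw [← SetLike.mem_coe, Submodule.topologicalClosure_coe]
  refine map_mem_closure T.continuous ?_ fun k hk => ⟨k, hk, rfl⟩
  rw [← Submodule.topologicalClosure_coe]
  exact K.topologicalClosure.starProjection_apply_mem x

theorem projOp_adjoint_projOp_map (T : E →L[ℂ] F) (u : F) :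
    projOp K (adjoint T (projOp (K.map (T : E →ₗ[ℂ] F)) u)) = projOp K (adjoint T u) := by
  have hperp : adjoint T (u - projOp (K.map (T : E →ₗ[ℂ] F)) u) ∈ Kᗮ := fun k hk => by
    rw [adjoint_inner_right]
    exact sub_projOp_apply_mem_orthogonal _ u _ ⟨k, hk, rfl⟩
  calc projOp K (adjoint T (projOp (K.map (T : E →ₗ[ℂ] F)) u))
      = projOp K (adjoint T (projOp (K.map (T : E →ₗ[ℂ] F)) u))
        + projOp K (adjoint T (u - projOp (K.map (T : E →ₗ[ℂ] F)) u)) := by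
        rw [projOp_apply_of_mem_orthogonal K hperp, add_zero]
    _ = projOp K (adjoint T u) := by rw [← map_add, ← map_add, add_sub_cancel]

end projOp

section DirectSum

variable {E F E' F' : Type*} [NormedAddCommGroup E] [InnerProductSpace ℂ E]
  [NormedAddCommGroup F] [InnerProductSpace ℂ F]

theorem oplus_apply [NormedAddCommGroup E'] [NormedSpace ℂ E'] [NormedAddCommGroup F']
    [NormedSpace ℂ F'] (A : E →L[ℂ] E') (B : F →L[ℂ] F') (u : WithLp 2 (E × F)) :
    oplus A B u = WithLp.toLp 2 (A u.fst, B u.snd) := rfl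

theorem mem_prodSub {W : Submodule ℂ E} {V : Submodule ℂ F} {u : WithLp 2 (E × F)} :
    u ∈ prodSub W V ↔ u.fst ∈ W ∧ u.snd ∈ V := by
  constructor
  · rintro ⟨x, hx, rfl⟩
    exact hx
  · intro hu
    exact ⟨(u.fst, u.snd), hu, rfl⟩

theorem oplus_proj_eq_projOp_prodSub [CompleteSpace E] [CompleteSpace F]
    (W : Submodule ℂ E) [CompleteSpace W] (V : Submodule ℂ F) [CompleteSpace V] :
    oplus (proj W) (proj V) = projOp (prodSub W V) := by
  ext u
  symm
  refine projOp_apply_eq_of_mem_of_sub_mem_orthogonal _ ?_ fun x hx => ?_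
  · exact mem_prodSub.2 ⟨W.starProjection_apply_mem _, V.starProjection_apply_mem _⟩
  · obtain ⟨hxW, hxV⟩ := mem_prodSub.1 hx
    have h₁ := Submodule.inner_right_of_mem_orthogonal hxW
      (W.sub_starProjection_mem_orthogonal u.fst)
    have h₂ := Submodule.inner_right_of_mem_orthogonal hxV
      (V.sub_starProjection_mem_orthogonal u.snd)
    simp only [WithLp.prod_inner_apply, oplus_apply, WithLp.ofLp_sub, Prod.fst_sub, Prod.snd_sub]
    exact (congrArg₂ (· + ·) h₁ h₂).trans (add_zero 0)

end DirectSum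

section FrameOperator

variable {ι H : Type*} [NormedAddCommGroup H] [InnerProductSpace ℂ H] [CompleteSpace H]
  {K : ι → Type*} [∀ j, NormedAddCommGroup (K j)] [∀ j, InnerProductSpace ℂ (K j)]
  [∀ j, CompleteSpace (K j)] {c : ι → ℝ} {L : ∀ j, H →L[ℂ] K j} {S : H →L[ℂ] H}

theorem hasSum_inner_left_of_hasSum_adjoint
    (hS : ∀ u, HasSum (fun j => c j • adjoint (L j) (L j u)) (S u)) (u w : H) :
    HasSum (fun j => (c j : ℂ) * inner ℂ (L j u) (L j w)) (inner ℂ (S u) w) := by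
  have := (hS u).mapL (innerSLFlip ℂ w)
  simp only [innerSLFlip_apply_apply, RCLike.real_smul_eq_coe_smul (K := ℂ), inner_smul_left,
    RCLike.conj_ofReal, adjoint_inner_left] at this
  exact this

theorem hasSum_inner_right_of_hasSum_adjoint
    (hS : ∀ u, HasSum (fun j => c j • adjoint (L j) (L j u)) (S u)) (u w : H) :
    HasSum (fun j => (c j : ℂ) * inner ℂ (L j u) (L j w)) (inner ℂ u (S w)) := by
  have := (hS w).mapL (innerSL ℂ u)
  simp only [innerSL_apply_apply, RCLike.real_smul_eq_coe_smul (K := ℂ), inner_smul_right,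
    adjoint_inner_right] at this
  exact this

theorem isSelfAdjoint_of_hasSum_adjoint
    (hS : ∀ u, HasSum (fun j => c j • adjoint (L j) (L j u)) (S u)) : IsSelfAdjoint S :=
  isSelfAdjoint_iff_isSymmetric.2 fun u w =>
    (hasSum_inner_left_of_hasSum_adjoint hS u w).unique
      (hasSum_inner_right_of_hasSum_adjoint hS u w)

theorem hasSum_norm_sq_of_hasSum_adjoint
    (hS : ∀ u, HasSum (fun j => c j • adjoint (L j) (L j u)) (S u)) (u : H) :
    HasSum (fun j => c j * ‖L j u‖ ^ 2) (re (inner ℂ (S u) u)) := by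
  refine ((hasSum_inner_left_of_hasSum_adjoint hS u u).mapL reCLM).congr_fun fun j => ?_
  rw [reCLM_apply, RCLike.re_to_complex, Complex.re_ofReal_mul, ← RCLike.re_to_complex,
    inner_self_eq_norm_sq]

theorem isPositive_of_hasSum_adjoint (hc : ∀ j, 0 ≤ c j)
    (hS : ∀ u, HasSum (fun j => c j • adjoint (L j) (L j u)) (S u)) : S.IsPositive :=
  isPositive_def'.2 ⟨isSelfAdjoint_of_hasSum_adjoint hS, fun u =>
    (hasSum_norm_sq_of_hasSum_adjoint hS u).nonneg fun j => mul_nonneg (hc j) (sq_nonneg _)⟩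

end FrameOperator

section Inverse

variable {H : Type*} [NormedAddCommGroup H] [InnerProductSpace ℂ H]

theorem re_inner_real_smul_self (B : ℝ) (u : H) : re (inner ℂ (B • u) u) = B * ‖u‖ ^ 2 := by
  rw [← Complex.coe_smul, inner_smul_left, Complex.conj_ofReal, re_to_complex,
    Complex.re_ofReal_mul, ← re_to_complex, inner_self_eq_norm_sq]

variable [CompleteSpace H] {S : H ≃L[ℂ] H}

theorem le_algebraMap_iff_re_inner_le {T : H →L[ℂ] H} (hT : IsSelfAdjoint T) (B : ℝ) :
    T ≤ algebraMap ℝ (H →L[ℂ] H) B ↔ ∀ u, re (inner ℂ (T u) u) ≤ B * ‖u‖ ^ 2 := by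
  rw [le_def, isPositive_def', and_iff_right ((IsSelfAdjoint.algebraMap _ (.all B)).sub hT)]
  simp only [reApplyInnerSelf_apply, Algebra.algebraMap_eq_smul_one, sub_apply, smul_apply,
    one_apply_eq_self, inner_sub_left, map_sub, sub_nonneg, re_inner_real_smul_self]

theorem algebraMap_le_iff_le_re_inner {T : H →L[ℂ] H} (hT : IsSelfAdjoint T) (B : ℝ) :
    algebraMap ℝ (H →L[ℂ] H) B ≤ T ↔ ∀ u, B * ‖u‖ ^ 2 ≤ re (inner ℂ (T u) u) := by
  rw [le_def, isPositive_def', and_iff_right (hT.sub (IsSelfAdjoint.algebraMap _ (.all B)))]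
  simp only [reApplyInnerSelf_apply, Algebra.algebraMap_eq_smul_one, sub_apply, smul_apply,
    one_apply_eq_self, inner_sub_left, map_sub, sub_nonneg, re_inner_real_smul_self]

theorem ContinuousLinearEquiv.isPositive_symm (hS : (S : H →L[ℂ] H).IsPositive) :
    (S.symm : H →L[ℂ] H).IsPositive :=
  (nonneg_iff_isPositive _).1 <| CFC.inv_nonneg_of_nonneg S.toUnit <| (nonneg_iff_isPositive _).2 hS

theorem inv_mul_norm_sq_le_re_inner_symm (hS : (S : H →L[ℂ] H).IsPositive) {B : ℝ}
    (hSB : ∀ u, re (inner ℂ (S u) u) ≤ B * ‖u‖ ^ 2) (u : H) :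
    B⁻¹ * ‖u‖ ^ 2 ≤ re (inner ℂ (S.symm u) u) := by
  rcases le_or_gt B 0 with hB | hB
  · exact (mul_nonpos_of_nonpos_of_nonneg (inv_nonpos.2 hB) (sq_nonneg _)).trans
      ((S.isPositive_symm hS).re_inner_nonneg_left u)
  let b : (H →L[ℂ] H)ˣ := Units.map (algebraMap ℝ (H →L[ℂ] H)) (Units.mk0 B hB.ne')
  have hle : (S.toUnit : H →L[ℂ] H) ≤ b :=
    (le_algebraMap_iff_re_inner_le hS.isSelfAdjoint B).2 hSB
  have hinv := CStarAlgebra.inv_le_inv ((nonneg_iff_isPositive _).2 hS) hle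
  exact (algebraMap_le_iff_le_re_inner (S.isPositive_symm hS).isSelfAdjoint B⁻¹).1 hinv u

end Inverse

section DualFrame

variable {ι H : Type*} [NormedAddCommGroup H] [InnerProductSpace ℂ H] [CompleteSpace H]
  {K : ι → Type*} [∀ j, NormedAddCommGroup (K j)] [∀ j, InnerProductSpace ℂ (K j)]
  [∀ j, CompleteSpace (K j)]

def IsGFusionFrameOp (N : ι → Submodule ℂ H) (T : ∀ j, H →L[ℂ] K j) (v : ι → ℝ)
    (S : H →L[ℂ] H) : Prop :=
  ∀ u, HasSum (fun j => v j ^ 2 • projOp (N j) (adjoint (T j) (T j (projOp (N j) u)))) (S u)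

variable {N : ι → Submodule ℂ H} {T : ∀ j, H →L[ℂ] K j} {v : ι → ℝ} {S : H ≃L[ℂ] H}

theorem projOp_symm_projOp_map (hS : IsSelfAdjoint (S.symm : H →L[ℂ] H)) (M : Submodule ℂ H)
    (u : H) :
    projOp M (S.symm (projOp (M.map S.symm.toContinuousLinearMap.toLinearMap) u)) =
      projOp M (S.symm u) := by
  simpa only [hS.adjoint_eq, ContinuousLinearEquiv.coe_coe] using
    projOp_adjoint_projOp_map M (S.symm : H →L[ℂ] H) u

namespace IsGFusionFrameOp

theorem hasSum_adjoint_comp (hS : IsGFusionFrameOp N T v S) (u : H) :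
    HasSum (fun j => v j ^ 2 • adjoint (T j ∘L projOp (N j)) ((T j ∘L projOp (N j)) u)) (S u) := by
  simpa only [adjoint_comp, adjoint_projOp, comp_apply, ContinuousLinearEquiv.coe_coe] using hS u

theorem isPositive (hS : IsGFusionFrameOp N T v S) : (S : H →L[ℂ] H).IsPositive :=
  isPositive_of_hasSum_adjoint (fun j => sq_nonneg (v j)) hS.hasSum_adjoint_comp

theorem isSelfAdjoint_symm (hS : IsGFusionFrameOp N T v S) : IsSelfAdjoint (S.symm : H →L[ℂ] H) :=
  (S.isPositive_symm hS.isPositive).isSelfAdjoint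

theorem canonicalDual_frameBounds (hS : IsGFusionFrameOp N T v S) {B : ℝ}
    (hB : ∀ u, ∑' j, v j ^ 2 * ‖T j (projOp (N j) u)‖ ^ 2 ≤ B * ‖u‖ ^ 2) :
    ∃ B' > (0 : ℝ), ∀ u : H,
      Summable (fun j => v j ^ 2 * ‖T j (projOp (N j)
        (S.symm (projOp ((N j).map S.symm.toContinuousLinearMap.toLinearMap) u)))‖ ^ 2) ∧
      B⁻¹ * ‖u‖ ^ 2 ≤ ∑' j, v j ^ 2 * ‖T j (projOp (N j)
        (S.symm (projOp ((N j).map S.symm.toContinuousLinearMap.toLinearMap) u)))‖ ^ 2 ∧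
      ∑' j, v j ^ 2 * ‖T j (projOp (N j)
        (S.symm (projOp ((N j).map S.symm.toContinuousLinearMap.toLinearMap) u)))‖ ^ 2 ≤
        B' * ‖u‖ ^ 2 := by
  have hnorm := hasSum_norm_sq_of_hasSum_adjoint (S := (S : H →L[ℂ] H)) hS.hasSum_adjoint_comp
  have hdual : ∀ u, HasSum (fun j => v j ^ 2 * ‖T j (projOp (N j)
      (S.symm (projOp ((N j).map S.symm.toContinuousLinearMap.toLinearMap) u)))‖ ^ 2)
      (re (inner ℂ (S.symm u) u)) := fun u => by
    have h := hnorm (S.symm u)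
    rw [ContinuousLinearEquiv.coe_coe, S.apply_symm_apply, inner_re_symm] at h
    simpa only [projOp_symm_projOp_map hS.isSelfAdjoint_symm, comp_apply] using h
  refine ⟨‖(S.symm : H →L[ℂ] H)‖ + 1, by positivity, fun u => ⟨(hdual u).summable, ?_, ?_⟩⟩
  · rw [(hdual u).tsum_eq]
    exact inv_mul_norm_sq_le_re_inner_symm hS.isPositive (fun u => (hnorm u).tsum_eq ▸ hB u) u
  · rw [(hdual u).tsum_eq]
    calc re (inner ℂ (S.symm u) u) ≤ ‖S.symm u‖ * ‖u‖ := re_inner_le_norm _ _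
      _ ≤ ‖(S.symm : H →L[ℂ] H)‖ * ‖u‖ * ‖u‖ := by
        gcongr; exact (S.symm : H →L[ℂ] H).le_opNorm u
      _ ≤ (‖(S.symm : H →L[ℂ] H)‖ + 1) * ‖u‖ ^ 2 := by nlinarith [norm_nonneg u]

theorem canonicalDual (hS : IsGFusionFrameOp N T v S) :
    IsGFusionFrameOp (fun j => (N j).map S.symm.toContinuousLinearMap.toLinearMap)
      (fun j => (T j).comp ((projOp (N j)).comp S.symm.toContinuousLinearMap)) v S.symm := by
  intro u
  have h := (hS (S.symm u)).mapL (S.symm : H →L[ℂ] H)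
  simp only [ContinuousLinearEquiv.coe_coe, ContinuousLinearEquiv.apply_symm_apply] at h
  refine h.congr_fun fun j => ?_
  simp only [comp_apply, ContinuousLinearEquiv.coe_coe]
  rw [projOp_symm_projOp_map hS.isSelfAdjoint_symm, adjoint_comp, adjoint_comp, adjoint_projOp,
    hS.isSelfAdjoint_symm.adjoint_eq, comp_apply, comp_apply, projOp_map_apply_projOp]
  exact ((S.symm : H →L[ℂ] H).map_smul_of_tower _ _).symm

end IsGFusionFrameOp

end DualFrame

theorem stmt17_general {ι E F : Type*} [NormedAddCommGroup E] [InnerProductSpace ℂ E] [CompleteSpace E]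
    [NormedAddCommGroup F] [InnerProductSpace ℂ F] [CompleteSpace F]
    {G X : ι → Type*} [∀ j, NormedAddCommGroup (G j)] [∀ j, InnerProductSpace ℂ (G j)]
    [∀ j, CompleteSpace (G j)] [∀ j, NormedAddCommGroup (X j)] [∀ j, InnerProductSpace ℂ (X j)]
    [∀ j, CompleteSpace (X j)]
    (W : ι → Submodule ℂ E) [∀ j, CompleteSpace (W j)]
    (Vs : ι → Submodule ℂ F) [∀ j, CompleteSpace (Vs j)]
    (v : ι → ℝ)
    (Λ : ∀ j, E →L[ℂ] G j) (Γ : ∀ j, F →L[ℂ] X j)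
    (A₁ B₁ : ℝ)
    (hframe : ∀ u : WithLp 2 (E × F),
      Summable (fun j => (v j) ^ 2 *
        ‖oplus (Λ j) (Γ j) (oplus (proj (W j)) (proj (Vs j)) u)‖ ^ 2) ∧
      A₁ * ‖u‖ ^ 2 ≤
        ∑' j, (v j) ^ 2 * ‖oplus (Λ j) (Γ j) (oplus (proj (W j)) (proj (Vs j)) u)‖ ^ 2 ∧
      ∑' j, (v j) ^ 2 * ‖oplus (Λ j) (Γ j) (oplus (proj (W j)) (proj (Vs j)) u)‖ ^ 2 ≤
        B₁ * ‖u‖ ^ 2)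
    (S : WithLp 2 (E × F) ≃L[ℂ] WithLp 2 (E × F))
    (hS : ∀ u : WithLp 2 (E × F), HasSum
      (fun j => (v j) ^ 2 • oplus (proj (W j)) (proj (Vs j))
        (ContinuousLinearMap.adjoint (oplus (Λ j) (Γ j))
          (oplus (Λ j) (Γ j) (oplus (proj (W j)) (proj (Vs j)) u)))) (S u)) :
    (∃ B' > (0 : ℝ), ∀ u : WithLp 2 (E × F),
      Summable (fun j => (v j) ^ 2 *
        ‖oplus (Λ j) (Γ j) (oplus (proj (W j)) (proj (Vs j))
          (S.symm (projOp ((prodSub (W j) (Vs j)).map S.symm.toContinuousLinearMap.toLinearMap) u)))‖ ^ 2) ∧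
      B₁⁻¹ * ‖u‖ ^ 2 ≤
        ∑' j, (v j) ^ 2 *
          ‖oplus (Λ j) (Γ j) (oplus (proj (W j)) (proj (Vs j))
            (S.symm (projOp ((prodSub (W j) (Vs j)).map S.symm.toContinuousLinearMap.toLinearMap) u)))‖ ^ 2 ∧
      ∑' j, (v j) ^ 2 *
          ‖oplus (Λ j) (Γ j) (oplus (proj (W j)) (proj (Vs j))
            (S.symm (projOp ((prodSub (W j) (Vs j)).map S.symm.toContinuousLinearMap.toLinearMap) u)))‖ ^ 2 ≤
        B' * ‖u‖ ^ 2) ∧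
    ∀ u : WithLp 2 (E × F), HasSum
      (fun j => (v j) ^ 2 •
        projOp ((prodSub (W j) (Vs j)).map S.symm.toContinuousLinearMap.toLinearMap)
          (ContinuousLinearMap.adjoint
            ((oplus (Λ j) (Γ j)).comp ((oplus (proj (W j)) (proj (Vs j))).comp
              S.symm.toContinuousLinearMap))
            ((oplus (Λ j) (Γ j)) (oplus (proj (W j)) (proj (Vs j))
              (S.symm (projOp ((prodSub (W j) (Vs j)).map S.symm.toContinuousLinearMap.toLinearMap) u))))))
      (S.symm u) := by
  simp only [oplus_proj_eq_projOp_prodSub] at hframe hS ⊢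
  have hS' : IsGFusionFrameOp (fun j => prodSub (W j) (Vs j)) (fun j => oplus (Λ j) (Γ j)) v S := hS
  exact ⟨hS'.canonicalDual_frameBounds fun u => (hframe u).2.2, hS'.canonicalDual⟩

/-- Δ = {(S⁻¹(W_j⊕V_j), (Λ_j⊕Γ_j) P_{W_j⊕V_j} S⁻¹, v_j)} is a g-fusion frame
for H ⊕ X with lower bound B₁⁻¹, and its frame operator equals S⁻¹. -/
theorem stmt17 {ι E F : Type*} [NormedAddCommGroup E] [InnerProductSpace ℂ E] [CompleteSpace E]
    [NormedAddCommGroup F] [InnerProductSpace ℂ F] [CompleteSpace F]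
    {G X : ι → Type*} [∀ j, NormedAddCommGroup (G j)] [∀ j, InnerProductSpace ℂ (G j)]
    [∀ j, CompleteSpace (G j)] [∀ j, NormedAddCommGroup (X j)] [∀ j, InnerProductSpace ℂ (X j)]
    [∀ j, CompleteSpace (X j)]
    (W : ι → Submodule ℂ E) [∀ j, CompleteSpace (W j)]
    (Vs : ι → Submodule ℂ F) [∀ j, CompleteSpace (Vs j)]
    (v : ι → ℝ) (hv : ∀ j, 0 < v j)
    (Λ : ∀ j, E →L[ℂ] G j) (Γ : ∀ j, F →L[ℂ] X j)
    (A₁ B₁ : ℝ) (hA₁ : 0 < A₁) (hAB : A₁ ≤ B₁)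
    (hframe : ∀ u : WithLp 2 (E × F),
      Summable (fun j => (v j) ^ 2 *
        ‖oplus (Λ j) (Γ j) (oplus (proj (W j)) (proj (Vs j)) u)‖ ^ 2) ∧
      A₁ * ‖u‖ ^ 2 ≤
        ∑' j, (v j) ^ 2 * ‖oplus (Λ j) (Γ j) (oplus (proj (W j)) (proj (Vs j)) u)‖ ^ 2 ∧
      ∑' j, (v j) ^ 2 * ‖oplus (Λ j) (Γ j) (oplus (proj (W j)) (proj (Vs j)) u)‖ ^ 2 ≤
        B₁ * ‖u‖ ^ 2)
    (S : WithLp 2 (E × F) ≃L[ℂ] WithLp 2 (E × F))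
    (hS : ∀ u : WithLp 2 (E × F), HasSum
      (fun j => (v j) ^ 2 • oplus (proj (W j)) (proj (Vs j))
        (ContinuousLinearMap.adjoint (oplus (Λ j) (Γ j))
          (oplus (Λ j) (Γ j) (oplus (proj (W j)) (proj (Vs j)) u)))) (S u)) :
    (∃ B' > (0 : ℝ), ∀ u : WithLp 2 (E × F),
      Summable (fun j => (v j) ^ 2 *
        ‖oplus (Λ j) (Γ j) (oplus (proj (W j)) (proj (Vs j))
          (S.symm (projOp ((prodSub (W j) (Vs j)).map S.symm.toContinuousLinearMap.toLinearMap) u)))‖ ^ 2) ∧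
      B₁⁻¹ * ‖u‖ ^ 2 ≤
        ∑' j, (v j) ^ 2 *
          ‖oplus (Λ j) (Γ j) (oplus (proj (W j)) (proj (Vs j))
            (S.symm (projOp ((prodSub (W j) (Vs j)).map S.symm.toContinuousLinearMap.toLinearMap) u)))‖ ^ 2 ∧
      ∑' j, (v j) ^ 2 *
          ‖oplus (Λ j) (Γ j) (oplus (proj (W j)) (proj (Vs j))
            (S.symm (projOp ((prodSub (W j) (Vs j)).map S.symm.toContinuousLinearMap.toLinearMap) u)))‖ ^ 2 ≤
        B' * ‖u‖ ^ 2) ∧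
    ∀ u : WithLp 2 (E × F), HasSum
      (fun j => (v j) ^ 2 •
        projOp ((prodSub (W j) (Vs j)).map S.symm.toContinuousLinearMap.toLinearMap)
          (ContinuousLinearMap.adjoint
            ((oplus (Λ j) (Γ j)).comp ((oplus (proj (W j)) (proj (Vs j))).comp
              S.symm.toContinuousLinearMap))
            ((oplus (Λ j) (Γ j)) (oplus (proj (W j)) (proj (Vs j))
              (S.symm (projOp ((prodSub (W j) (Vs j)).map S.symm.toContinuousLinearMap.toLinearMap) u))))))
      (S.symm u) :=
  stmt17_general W Vs v Λ Γ A₁ B₁ hframe S hS
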